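/- arXiv:2203.03023 — 2 statements merged into one kernel-verified Lean document; each statement's English description precedes it below -/
import Mathlib

section
/- Let m ≥ 1 be an integer, let A be a commutative ℚ-algebra, and let (E, H, P) be a symmetric triple over A whose coefficients h_k = [t^k]H vanish whenever m does not divide k. Write e_k = [t^k]E and p_k = [t^{k−1}]P. Define formal power series Ê, Ĥ, P̂ over A by [t^k]Ê = (−1)^{k(m−1)}·e_{mk}, [t^k]Ĥ = h_{mk}, and [t^{k−1}]P̂ = p_{mk}/m for k ≥ 1 (so [t^k]Ê = (−1)^k e_{mk} when m is even and [t^k]Ê = e_{mk} when m is odd). Then (Ê, Ĥ, P̂) is a symmetric triple over A. -/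
open PowerSeries Finset

/-- A symmetric triple: `E` and `H` have constant coefficient `1`,
`E′(t) = E(t)·P(−t)` and `H′(t) = H(t)·P(t)`. -/
def IsSymmetricTriple {A : Type*} [CommRing A] (E H P : PowerSeries A) : Prop :=
  PowerSeries.constantCoeff E = 1 ∧ PowerSeries.constantCoeff H = 1 ∧
    d⁄dX A E = E * PowerSeries.rescale (-1) P ∧ d⁄dX A H = H * P

/-!
Write `H(t) = Ĥ(t^m)`. As `H` is invertible, the chain rule gives
`P = H'/H = m t^{m-1} Q(t^m)` with `Q = Ĥ'/Ĥ`, and reading off the coefficients of `P` in degrees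
`≡ -1 (mod m)` identifies `Q` with `P̂`; in particular `Ĥ' = Ĥ Q`. Since `P(-t)` is again
concentrated in degrees `≡ -1 (mod m)`, the equation `E' = E·P(-t)` forces, degree by degree, `E`
to be concentrated in degrees divisible by `m`, say `E(t) = G(t^m)`. Cancelling `m t^{m-1}` from
the chain rule yields `G'(s) = G(s)·(-1)^{m-1} Q((-1)^m s)`, and the involutive rescaling
`Ê(s) = G((-1)^{m-1} s)` turns this into `Ê' = Ê·Q(-s)`.
-/

namespace PowerSeries

variable {A : Type*} [CommRing A]

instance instIsAddTorsionFree [IsAddTorsionFree A] : IsAddTorsionFree A⟦X⟧ :=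
  inferInstanceAs (IsAddTorsionFree ((Unit →₀ ℕ) → A))

theorem derivative_rescale (a : A) (f : A⟦X⟧) :
    d⁄dX A (rescale a f) = a • rescale a (d⁄dX A f) := by
  ext n
  simp only [coeff_derivative, coeff_rescale, coeff_smul, smul_eq_mul, pow_succ]
  ring

theorem derivative_rescale_eq_mul_rescale {f q : A⟦X⟧} {c s : A} (hc : c * c = 1)
    (h : d⁄dX A f = f * (c • rescale s q)) :
    d⁄dX A (rescale c f) = rescale c f * rescale (s * c) q := by
  rw [derivative_rescale, h, map_mul, ← mul_smul_comm]
  congr 1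
  ext n
  simp only [coeff_smul, coeff_rescale, smul_eq_mul]
  linear_combination (c ^ n * s ^ n * coeff n q) * hc

/-- The power series analogue of `Polynomial.contract`, a one-sided inverse of `expand m`. -/
noncomputable def contract (m : ℕ) (f : A⟦X⟧) : A⟦X⟧ :=
  mk fun k => coeff (m * k) f

@[simp]
theorem coeff_contract (m k : ℕ) (f : A⟦X⟧) : coeff k (contract m f) = coeff (m * k) f :=
  coeff_mk _ _

section Expand

variable (m : ℕ) (hm : m ≠ 0)

theorem expand_contract {f : A⟦X⟧} (hf : ∀ k, ¬ m ∣ k → coeff k f = 0) :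
    expand m hm (contract m f) = f := by
  ext n
  rw [coeff_expand]
  split_ifs with h
  · obtain ⟨k, rfl⟩ := h
    rw [coeff_contract, Nat.mul_div_cancel_left _ (Nat.pos_of_ne_zero hm)]
  · exact (hf n h).symm

theorem expand_injective : Function.Injective (expand m hm : A⟦X⟧ → A⟦X⟧) := fun f g h => by
  ext k
  simpa using congrArg (coeff (m * k)) h

theorem derivative_expand (f : A⟦X⟧) :
    d⁄dX A (expand m hm f) = expand m hm (d⁄dX A f) * ((m : A⟦X⟧) * X ^ (m - 1)) := by
  rw [expand_apply, expand_apply, derivative_subst (HasSubst.X_pow hm), derivative_pow,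
    derivative_X, mul_one]

theorem rescale_expand (a : A) (f : A⟦X⟧) :
    rescale a (expand m hm f) = expand m hm (rescale (a ^ m) f) := by
  ext n
  simp only [coeff_rescale, coeff_expand]
  split_ifs with h
  · obtain ⟨k, rfl⟩ := h
    rw [Nat.mul_div_cancel_left _ (Nat.pos_of_ne_zero hm), pow_mul]
  · rw [mul_zero]

theorem rescale_X_pow_mul_expand (a : A) (f : A⟦X⟧) :
    rescale a (X ^ (m - 1) * expand m hm f) =
      X ^ (m - 1) * expand m hm (a ^ (m - 1) • rescale (a ^ m) f) := by
  rw [map_mul, map_pow, rescale_X, mul_pow, ← map_pow, rescale_expand, expand_smul,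
    smul_eq_C_mul]
  ring

theorem coeff_X_pow_mul_expand (f : A⟦X⟧) (k : ℕ) :
    coeff (m * (k + 1) - 1) (X ^ (m - 1) * expand m hm f) = coeff k f := by
  rw [show m * (k + 1) - 1 = m * k + (m - 1) by have := Nat.pos_of_ne_zero hm; grind,
    coeff_X_pow_mul, coeff_expand_mul]

theorem coeff_X_pow_mul_expand_of_not_dvd (f : A⟦X⟧) {j : ℕ} (hj : ¬ m ∣ j + 1) :
    coeff j (X ^ (m - 1) * expand m hm f) = 0 := by
  rw [coeff_X_pow_mul']
  split_ifs with h
  · refine coeff_expand_of_not_dvd _ _ _ fun hd => hj ?_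
    rw [show j + 1 = j - (m - 1) + m by omega]
    exact hd.add dvd_rfl
  · rfl

theorem coeff_nsmul_X_pow_mul_expand_of_not_dvd (f : A⟦X⟧) {j : ℕ} (hj : ¬ m ∣ j + 1) :
    coeff j (m • (X ^ (m - 1) * expand m hm f)) = 0 := by
  rw [map_nsmul, coeff_X_pow_mul_expand_of_not_dvd m hm f hj, smul_zero]

theorem mk_inv_smul_coeff_eq [Algebra ℚ A] {p q : A⟦X⟧}
    (hp : p = m • (X ^ (m - 1) * expand m hm q)) :
    mk (fun k => ((m : ℚ)⁻¹) • coeff (m * (k + 1) - 1) p) = q := by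
  ext k
  rw [coeff_mk, hp, map_nsmul, coeff_X_pow_mul_expand, ← Nat.cast_smul_eq_nsmul ℚ,
    inv_smul_smul₀ (Nat.cast_ne_zero.mpr hm)]

theorem derivative_expand_eq_mul_iff [IsAddTorsionFree A] {f q : A⟦X⟧} :
    d⁄dX A (expand m hm f) = expand m hm f * (m • (X ^ (m - 1) * expand m hm q)) ↔
      d⁄dX A f = f * q := by
  have hlhs : d⁄dX A (expand m hm f) = m • (X ^ (m - 1) * expand m hm (d⁄dX A f)) := by
    rw [derivative_expand, nsmul_eq_mul]
    ring
  have hrhs : expand m hm f * (m • (X ^ (m - 1) * expand m hm q)) =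
      m • (X ^ (m - 1) * expand m hm (f * q)) := by
    rw [map_mul, nsmul_eq_mul, nsmul_eq_mul]
    ring
  rw [hlhs, hrhs, (nsmul_right_injective hm).eq_iff, X_pow_mul_inj,
    (expand_injective m hm).eq_iff]

-- The witness is `q = g⁻¹ * g'`, by the chain rule for `g(X ^ m)`.
theorem exists_eq_nsmul_X_pow_mul_expand {g p : A⟦X⟧} (hg : IsUnit (constantCoeff g))
    (h : d⁄dX A (expand m hm g) = expand m hm g * p) :
    ∃ q, p = m • (X ^ (m - 1) * expand m hm q) := by
  obtain ⟨u, rfl⟩ := isUnit_iff_constantCoeff.mpr hg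
  refine ⟨↑u⁻¹ * d⁄dX A u, ?_⟩
  calc p = expand m hm ↑u⁻¹ * (expand m hm u * p) := by
        rw [← mul_assoc, ← map_mul, Units.inv_mul, map_one, one_mul]
    _ = m • (X ^ (m - 1) * expand m hm (↑u⁻¹ * d⁄dX A u)) := by
        rw [← h, derivative_expand, map_mul, nsmul_eq_mul]
        ring

theorem coeff_eq_zero_of_derivative_eq_mul [IsAddTorsionFree A] {f p : A⟦X⟧}
    (h : d⁄dX A f = f * p) (hp : ∀ j, ¬ m ∣ j + 1 → coeff j p = 0) :
    ∀ k, ¬ m ∣ k → coeff k f = 0 := by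
  intro k
  induction k using Nat.strong_induction_on with
  | _ k ih =>
    intro hk
    obtain _ | n := k
    · exact absurd (dvd_zero m) hk
    have hterms : ∀ ij ∈ antidiagonal n, coeff ij.1 f * coeff ij.2 p = 0 := by
      rintro ⟨i, j⟩ hij
      rw [HasAntidiagonal.mem_antidiagonal] at hij
      by_cases hj : m ∣ j + 1
      · have hi : ¬ m ∣ i := fun hi => hk (by rw [← hij, add_assoc]; exact hi.add hj)
        rw [ih i (by omega) hi, zero_mul]
      · rw [hp j hj, mul_zero]
    have hn := congrArg (coeff n) h
    rw [coeff_derivative, coeff_mul, sum_eq_zero hterms, ← Nat.cast_succ, mul_comm,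
      ← nsmul_eq_mul] at hn
    exact (nsmul_right_injective n.succ_ne_zero).eq_iff.mp (hn.trans (smul_zero _).symm)

variable [IsAddTorsionFree A]

theorem exists_derivative_contract_eq_mul {H P : A⟦X⟧} (hH0 : IsUnit (constantCoeff H))
    (hH : ∀ k, ¬ m ∣ k → coeff k H = 0) (hHd : d⁄dX A H = H * P) :
    ∃ q, P = m • (X ^ (m - 1) * expand m hm q) ∧ d⁄dX A (contract m H) = contract m H * q := by
  have hHc : expand m hm (contract m H) = H := expand_contract m hm hH
  obtain ⟨q, hP⟩ := exists_eq_nsmul_X_pow_mul_expand m hm (g := contract m H)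
    (by rwa [← coeff_zero_eq_constantCoeff_apply, coeff_contract, mul_zero,
      coeff_zero_eq_constantCoeff_apply]) (hHc ▸ hHd)
  exact ⟨q, hP, (derivative_expand_eq_mul_iff m hm).mp (by rw [hHc, ← hP, hHd])⟩

theorem derivative_rescale_contract_eq_mul {E P q : A⟦X⟧}
    (hEd : d⁄dX A E = E * rescale (-1) P) (hP : P = m • (X ^ (m - 1) * expand m hm q)) :
    d⁄dX A (rescale ((-1) ^ (m - 1)) (contract m E)) =
      rescale ((-1) ^ (m - 1)) (contract m E) * rescale (-1) q := by
  have hE : expand m hm (contract m E) = E := by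
    refine expand_contract m hm (coeff_eq_zero_of_derivative_eq_mul m hEd fun j hj => ?_)
    rw [coeff_rescale, hP, coeff_nsmul_X_pow_mul_expand_of_not_dvd m hm q hj, mul_zero]
  have hEc : d⁄dX A (contract m E) =
      contract m E * ((-1 : A) ^ (m - 1) • rescale ((-1) ^ m) q) := by
    rw [← derivative_expand_eq_mul_iff m hm, hE, hEd, hP, map_nsmul, rescale_X_pow_mul_expand]
  have hsq : (-1 : A) ^ (m - 1) * (-1) ^ (m - 1) = 1 := by
    rw [← mul_pow]
    simp
  have hneg : (-1 : A) ^ m * (-1) ^ (m - 1) = -1 := by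
    rw [← pow_add, Odd.neg_one_pow]
    exact ⟨m - 1, by omega⟩
  rw [derivative_rescale_eq_mul_rescale hsq hEc, hneg]

end Expand

end PowerSeries

/-- **Extracting an `m`-th root of a symmetric triple.**
If the coefficients of `H` vanish away from multiples of `m`, then
`([t^k]Ê = (−1)^{k(m−1)} e_{mk}, [t^k]Ĥ = h_{mk}, [t^{k}]P̂ = p_{m(k+1)}/m)`
is again a symmetric triple. -/
theorem symmetricTriple_root (m : ℕ) (hm : 1 ≤ m) (A : Type*) [CommRing A] [Algebra ℚ A]
    (E H P : PowerSeries A) (hT : IsSymmetricTriple E H P)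
    (hvanish : ∀ k : ℕ, ¬ m ∣ k → PowerSeries.coeff k H = 0) :
    IsSymmetricTriple
      (PowerSeries.mk fun k => (-1 : A) ^ (k * (m - 1)) * PowerSeries.coeff (m * k) E)
      (PowerSeries.mk fun k => PowerSeries.coeff (m * k) H)
      (PowerSeries.mk fun k => ((m : ℚ)⁻¹) • PowerSeries.coeff (m * (k + 1) - 1) P) := by
  have : IsAddTorsionFree A := .of_module_rat A
  have hm0 : m ≠ 0 := by omega
  obtain ⟨hE0, hH0, hEd, hHd⟩ := hT
  obtain ⟨q, hP, hHroot⟩ :=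
    exists_derivative_contract_eq_mul m hm0 (hH0 ▸ isUnit_one) hvanish hHd
  have hÊ : (mk fun k => (-1 : A) ^ (k * (m - 1)) * coeff (m * k) E) =
      rescale ((-1) ^ (m - 1)) (contract m E) := by
    ext k
    rw [coeff_mk, coeff_rescale, coeff_contract, ← pow_mul, mul_comm k]
  rw [mk_inv_smul_coeff_eq m hm0 hP, hÊ]
  refine ⟨?_, ?_, derivative_rescale_contract_eq_mul m hm0 hEd hP, hHroot⟩
  · simp [← coeff_zero_eq_constantCoeff_apply, hE0]
  · simp [← coeff_zero_eq_constantCoeff_apply, hH0]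
end

section
/- Let A be a commutative ℚ-algebra, let ρ be a formal power series over A with constant coefficient 1, and let α, β be integers. Suppose Q and Q′ are formal power series over A with constant coefficient 1 satisfying Q = ρ(t·Q(t)^α) and Q′ = ρ(t·Q′(t)^{α−β}) (substitution of the constant-term-zero series t·Q^α, resp. t·(Q′)^{α−β}, into ρ; integer powers taken in the unit group of A[[t]]). Then the substitution of t·Q′(t)^{−β} into t·Q(t)^β equals t; that is, t·Q′(t)^{−β} is the compositional inverse of t·Q(t)^β, so that (Q^β)* = (Q′)^{−β} where * is the star operation f*(t) := (t f(t))⟨−1⟩/t. -/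
/-!
Substituting `s = t·Q′^{-β}` into `Q = ρ(t·Q^α)` shows that `Q ∘ s` solves `Y = ρ(s·Y^α)`, and
so does `Q′`, because `s·Q′^α = t·Q′^{α-β}`. Since `t ∣ s`, this equation determines `Y`
modulo `t^{n+1}` from `Y` modulo `t^n`, so it has at most one solution: `Q ∘ s = Q′`, and
therefore `(t·Q^β) ∘ s = s·Q′^β = t`.
-/

open PowerSeries Finset

/-- Substitution of a power series `G` with zero constant coefficient into `f`:
the coefficient of `tⁿ` in `f(G)` is `Σ_{k=0}^{n} ([t^k]f)·([tⁿ](G^k))`. -/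
noncomputable def substInto {A : Type*} [CommRing A] (G f : PowerSeries A) : PowerSeries A :=
  PowerSeries.mk fun n =>
    ∑ k ∈ Finset.range (n + 1), PowerSeries.coeff k f * PowerSeries.coeff n (G ^ k)

theorem Units.dvd_val_zpow_sub_val_zpow {R : Type*} [CommRing R] {d : R} {u v : Rˣ}
    (h : d ∣ (u : R) - v) (n : ℤ) : d ∣ ((u ^ n : Rˣ) : R) - ((v ^ n : Rˣ) : R) := by
  let π := Ideal.Quotient.mk (Ideal.span {d})
  have dvd_sub_iff : ∀ x y : R, d ∣ x - y ↔ π x = π y := fun x y => by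
    rw [Ideal.Quotient.eq, Ideal.mem_span_singleton]
  have huv : Units.map (π : R →* R ⧸ Ideal.span {d}) u = Units.map (π : R →* _) v :=
    Units.ext ((dvd_sub_iff _ _).1 h)
  rw [dvd_sub_iff]
  simpa only [← map_zpow, Units.coe_map, MonoidHom.coe_coe] using
    congrArg (fun w => Units.val (w ^ n)) huv

namespace PowerSeries

variable {R : Type*} [CommRing R]

theorem substInto_eq_subst {G : R⟦X⟧} (hG : constantCoeff G = 0) (f : R⟦X⟧) :
    substInto G f = f.subst G := by
  ext n
  rw [coeff_subst' (HasSubst.of_constantCoeff_zero' hG), substInto, coeff_mk]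
  refine (finsum_eq_sum_of_support_subset _ fun d hd => ?_).symm
  rw [Finset.coe_range, Set.mem_Iio]
  by_contra! hnd
  have hcoeff : coeff n (G ^ d) = 0 :=
    X_pow_dvd_iff.mp (pow_dvd_pow_of_dvd (X_dvd_iff.mpr hG) d) n hnd
  exact hd (by dsimp only; rw [hcoeff, mul_zero])

theorem X_pow_dvd_subst_sub_subst {a b : R⟦X⟧} (ha : HasSubst a) (hb : HasSubst b) {m : ℕ}
    (hab : X ^ m ∣ a - b) (f : R⟦X⟧) : X ^ m ∣ f.subst a - f.subst b := by
  rw [X_pow_dvd_iff]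
  intro i hi
  rw [map_sub, coeff_subst' ha, coeff_subst' hb, sub_eq_zero]
  refine finsum_congr fun d => ?_
  have hd := X_pow_dvd_iff.mp (hab.trans (sub_dvd_pow_sub_pow a b d)) i hi
  rw [map_sub, sub_eq_zero] at hd
  rw [hd]

theorem eq_of_forall_X_pow_dvd_sub {f g : R⟦X⟧} (h : ∀ n, X ^ n ∣ f - g) : f = g := by
  ext i
  rw [← sub_eq_zero, ← map_sub]
  exact X_pow_dvd_iff.mp (h (i + 1)) i i.lt_succ_self

theorem units_eq_of_eq_subst_mul_zpow (f : R⟦X⟧) {s : R⟦X⟧} (hs : X ∣ s) (γ : ℤ)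
    {Y Z : R⟦X⟧ˣ} (hY : (Y : R⟦X⟧) = f.subst (s * ((Y ^ γ : R⟦X⟧ˣ) : R⟦X⟧)))
    (hZ : (Z : R⟦X⟧) = f.subst (s * ((Z ^ γ : R⟦X⟧ˣ) : R⟦X⟧))) : Y = Z := by
  have hasSubst : ∀ W : R⟦X⟧ˣ, HasSubst (s * ((W ^ γ : R⟦X⟧ˣ) : R⟦X⟧)) := fun W =>
    HasSubst.of_constantCoeff_zero' (X_dvd_iff.mp (dvd_mul_of_dvd_left hs _))
  refine Units.ext (eq_of_forall_X_pow_dvd_sub fun n => ?_)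
  induction n with
  | zero => rw [pow_zero]; exact one_dvd _
  | succ n ih =>
    have hzpow := Units.dvd_val_zpow_sub_val_zpow ih γ
    have hmul : X ^ (n + 1) ∣ s * ((Y ^ γ : R⟦X⟧ˣ) : R⟦X⟧) - s * ((Z ^ γ : R⟦X⟧ˣ) : R⟦X⟧) := by
      rw [← mul_sub, pow_succ']
      exact mul_dvd_mul hs hzpow
    rw [hY, hZ]
    exact X_pow_dvd_subst_sub_subst (hasSubst Y) (hasSubst Z) hmul f

theorem exists_subst_val_zpow {s : R⟦X⟧} (hs : HasSubst s) (u : R⟦X⟧ˣ) :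
    ∃ v : R⟦X⟧ˣ, ∀ γ : ℤ, subst s ((u ^ γ : R⟦X⟧ˣ) : R⟦X⟧) = ((v ^ γ : R⟦X⟧ˣ) : R⟦X⟧) :=
  ⟨Units.map (substAlgHom (R := R) hs : R⟦X⟧ →* R⟦X⟧) u, fun γ => by
    rw [← map_zpow, Units.coe_map, MonoidHom.coe_coe, coe_substAlgHom]⟩

end PowerSeries

theorem general_series_star_general (A : Type*) [CommRing A] (α β : ℤ)
    (uρ uQ uQ' : (PowerSeries A)ˣ)
    (hQ : (uQ : PowerSeries A) =
      substInto (PowerSeries.X * ((uQ ^ α : (PowerSeries A)ˣ) : PowerSeries A))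
        (uρ : PowerSeries A))
    (hQ' : (uQ' : PowerSeries A) =
      substInto (PowerSeries.X * ((uQ' ^ (α - β) : (PowerSeries A)ˣ) : PowerSeries A))
        (uρ : PowerSeries A)) :
    substInto (PowerSeries.X * ((uQ' ^ (-β) : (PowerSeries A)ˣ) : PowerSeries A))
        (PowerSeries.X * ((uQ ^ β : (PowerSeries A)ˣ) : PowerSeries A)) =
      PowerSeries.X := by
  have X_dvd : ∀ (u : A⟦X⟧ˣ) (γ : ℤ), X ∣ X * ((u ^ γ : A⟦X⟧ˣ) : A⟦X⟧) :=
    fun _ _ => dvd_mul_right _ _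
  have hasSubst : ∀ (u : A⟦X⟧ˣ) (γ : ℤ), HasSubst (X * ((u ^ γ : A⟦X⟧ˣ) : A⟦X⟧)) :=
    fun u γ => HasSubst.of_constantCoeff_zero' (X_dvd_iff.mp (X_dvd u γ))
  simp only [substInto_eq_subst (X_dvd_iff.mp (X_dvd _ _))] at hQ hQ' ⊢
  set s := X * ((uQ' ^ (-β) : A⟦X⟧ˣ) : A⟦X⟧)
  have hs : HasSubst s := hasSubst uQ' (-β)
  obtain ⟨V, hV_zpow⟩ := exists_subst_val_zpow hs uQ
  have hV : (V : A⟦X⟧) = subst (s * ((V ^ α : A⟦X⟧ˣ) : A⟦X⟧)) (uρ : A⟦X⟧) := by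
    calc (V : A⟦X⟧) = subst s (uQ : A⟦X⟧) := by simpa using (hV_zpow 1).symm
      _ = subst s (subst (X * ((uQ ^ α : A⟦X⟧ˣ) : A⟦X⟧)) (uρ : A⟦X⟧)) := by rw [← hQ]
      _ = subst (subst s (X * ((uQ ^ α : A⟦X⟧ˣ) : A⟦X⟧))) (uρ : A⟦X⟧) :=
        subst_comp_subst_apply (hasSubst uQ α) hs _
      _ = _ := by rw [subst_mul hs, subst_X hs, hV_zpow]
  have hQ's : (uQ' : A⟦X⟧) = subst (s * ((uQ' ^ α : A⟦X⟧ˣ) : A⟦X⟧)) (uρ : A⟦X⟧) := by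
    rwa [mul_assoc, ← Units.val_mul, ← zpow_add, neg_add_eq_sub]
  have hVQ' : V = uQ' := units_eq_of_eq_subst_mul_zpow (uρ : A⟦X⟧) (X_dvd uQ' (-β)) α hV hQ's
  rw [subst_mul hs, subst_X hs, hV_zpow, hVQ', mul_assoc, ← Units.val_mul, ← zpow_add,
    neg_add_cancel, zpow_zero, Units.val_one, mul_one]

/-- **The star of a power of a general series**: if `Q = ρ(t·Q^α)` and
`Q′ = ρ(t·Q′^{α−β})`, then `t·Q′(t)^{−β}` is the compositional inverse of `t·Q(t)^β`,
i.e. `(Q^β)* = Q′^{−β}`. Powers are taken in the unit group of `A[[t]]`, via units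
`uρ`, `uQ`, `uQ'` lying over `ρ`, `Q`, `Q′`. -/
theorem general_series_star (A : Type*) [CommRing A] [Algebra ℚ A] (α β : ℤ)
    (uρ uQ uQ' : (PowerSeries A)ˣ)
    (hρ : PowerSeries.constantCoeff (uρ : PowerSeries A) = 1)
    (hQc : PowerSeries.constantCoeff (uQ : PowerSeries A) = 1)
    (hQ'c : PowerSeries.constantCoeff (uQ' : PowerSeries A) = 1)
    (hQ : (uQ : PowerSeries A) =
      substInto (PowerSeries.X * ((uQ ^ α : (PowerSeries A)ˣ) : PowerSeries A))
        (uρ : PowerSeries A))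
    (hQ' : (uQ' : PowerSeries A) =
      substInto (PowerSeries.X * ((uQ' ^ (α - β) : (PowerSeries A)ˣ) : PowerSeries A))
        (uρ : PowerSeries A)) :
    substInto (PowerSeries.X * ((uQ' ^ (-β) : (PowerSeries A)ˣ) : PowerSeries A))
        (PowerSeries.X * ((uQ ^ β : (PowerSeries A)ˣ) : PowerSeries A)) =
      PowerSeries.X :=
  general_series_star_general A α β uρ uQ uQ' hQ hQ'
end
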